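/- The von Neumann entropy is subadditive: for any density operator ρ^{AB} on a tensor product of finite-dimensional Hilbert spaces with marginals ρ^A, ρ^B, one has S(ρ^{AB}) ≤ S(ρ^A) + S(ρ^B), where S(ρ) = −tr(ρ log ρ). -/

import Mathlib

open Matrix ComplexOrder

noncomputable section

/-- The von Neumann entropy of a Hermitian matrix: the Shannon entropy of its eigenvalue
distribution, `S(ρ) = −Σ_i λ_i log λ_i = −tr(ρ log ρ)`. -/
def vonNeumannEntropy {N : Type*} [Fintype N] [DecidableEq N]
    {M : Matrix N N ℂ} (hM : M.IsHermitian) : ℝ :=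
  -∑ i, hM.eigenvalues i * Real.log (hM.eigenvalues i)

/-- Klein/Gibbs inequality for a doubly stochastic mixing matrix. -/
lemma klein_aux {ι κ : Type*} [Fintype ι] [Fintype κ]
    (l : ι → ℝ) (t : κ → ℝ) (p : ι → κ → ℝ)
    (hl : ∀ i, 0 ≤ l i) (ht : ∀ j, 0 ≤ t j) (hp : ∀ i j, 0 ≤ p i j)
    (hls : ∑ i, l i = 1) (hts : ∑ j, t j = 1)
    (hrow : ∀ i, ∑ j, p i j = 1) (hcol : ∀ j, ∑ i, p i j = 1)
    (hz : ∀ i j, t j = 0 → l i * p i j = 0) :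
    ∑ i, ∑ j, l i * p i j * Real.log (t j) ≤ ∑ i, l i * Real.log (l i) := by
  have hpt : ∀ i j, l i * p i j * Real.log (t j) - l i * p i j * Real.log (l i)
      ≤ p i j * t j - l i * p i j := by
    intro i j
    rcases eq_or_lt_of_le (mul_nonneg (hl i) (hp i j)) with h0 | h0
    · rcases mul_eq_zero.mp h0.symm with h | h
      · simp [h]
        exact mul_nonneg (hp i j) (ht j)
      · simp [h]
    · have hli : 0 < l i := lt_of_le_of_ne (hl i) (by
        intro h; rw [← h] at h0; simp at h0)
      have hpi : 0 < p i j := lt_of_le_of_ne (hp i j) (by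
        intro h; rw [← h] at h0; simp at h0)
      have htj : 0 < t j := by
        rcases eq_or_lt_of_le (ht j) with h | h
        · exact absurd (hz i j h.symm) (ne_of_gt h0)
        · exact h
      have hlog := Real.log_le_sub_one_of_pos (div_pos htj hli)
      rw [Real.log_div (ne_of_gt htj) (ne_of_gt hli)] at hlog
      have h2 : l i * p i j * (Real.log (t j) - Real.log (l i))
          ≤ l i * p i j * (t j / l i - 1) :=
        mul_le_mul_of_nonneg_left hlog (le_of_lt h0)
      have h3 : l i * p i j * (t j / l i - 1) = p i j * t j - l i * p i j := by
        field_simp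
      nlinarith
  calc ∑ i, ∑ j, l i * p i j * Real.log (t j)
      ≤ ∑ i, ∑ j, (p i j * t j - l i * p i j + l i * p i j * Real.log (l i)) := by
        refine Finset.sum_le_sum fun i _ => Finset.sum_le_sum fun j _ => ?_
        linarith [hpt i j]
    _ = ∑ i, l i * Real.log (l i) := by
        have e1 : ∑ i, ∑ j, p i j * t j = 1 := by
          rw [Finset.sum_comm]
          simp only [← Finset.sum_mul, hcol, one_mul, hts]
        have e2 : ∑ i, ∑ j, l i * p i j = 1 := by
          simp only [← Finset.mul_sum, hrow, mul_one, hls]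
        have e3 : ∑ i, ∑ j, l i * p i j * Real.log (l i) = ∑ i, l i * Real.log (l i) := by
          refine Finset.sum_congr rfl fun i _ => ?_
          calc ∑ j, l i * p i j * Real.log (l i) = (l i * Real.log (l i)) * ∑ j, p i j := by
                rw [Finset.mul_sum]; exact Finset.sum_congr rfl fun j _ => by ring
            _ = l i * Real.log (l i) := by rw [hrow, mul_one]
        calc ∑ i, ∑ j, (p i j * t j - l i * p i j + l i * p i j * Real.log (l i))
            = (∑ i, ∑ j, p i j * t j) - (∑ i, ∑ j, l i * p i j)
              + ∑ i, ∑ j, l i * p i j * Real.log (l i) := by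
              simp [Finset.sum_add_distrib, Finset.sum_sub_distrib]
          _ = ∑ i, l i * Real.log (l i) := by rw [e1, e2, e3]; ring

/-- The first marginal of a PSD matrix is PSD. -/
lemma margA_psd {m n : Type*} [Fintype m] [Fintype n] [DecidableEq m] [DecidableEq n]
    (ρ : Matrix (m × n) (m × n) ℂ) (hρ : ρ.PosSemidef)
    (ρA : Matrix m m ℂ) (hρA : ∀ a a', ρA a a' = ∑ b, ρ (a, b) (a', b))
    (hh : ρA.IsHermitian) : ρA.PosSemidef := by
  refine Matrix.PosSemidef.of_dotProduct_mulVec_nonneg hh fun x => ?_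
  have key : star x ⬝ᵥ ρA *ᵥ x
      = ∑ b, star (fun q : m × n => if q.2 = b then x q.1 else 0) ⬝ᵥ
          ρ *ᵥ (fun q : m × n => if q.2 = b then x q.1 else 0) := by
    simp only [dotProduct, mulVec, Pi.star_apply, Fintype.sum_prod_type, apply_ite,
      star_zero, ite_mul, zero_mul, mul_ite, mul_zero, Finset.sum_ite_eq',
      Finset.mem_univ, if_true, dotProduct]
    rw [Finset.sum_comm]
    refine Finset.sum_congr rfl fun a _ => ?_
    rw [← Finset.mul_sum]
    congr 1
    rw [Finset.sum_comm]
    refine Finset.sum_congr rfl fun a' _ => ?_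
    rw [hρA, Finset.sum_mul]
  rw [key]
  exact Finset.sum_nonneg fun b _ => hρ.dotProduct_mulVec_nonneg _

/-- Kronecker product of two matrices with orthonormal rows has orthonormal rows. -/
lemma kron_unitary {m n : Type*} [Fintype m] [Fintype n] [DecidableEq m] [DecidableEq n]
    (A : Matrix m m ℂ) (B : Matrix n n ℂ) (hA : A * Aᴴ = 1) (hB : B * Bᴴ = 1) :
    (Matrix.of (fun p j : m × n => A p.1 j.1 * B p.2 j.2)) *
      (Matrix.of (fun p j : m × n => A p.1 j.1 * B p.2 j.2))ᴴ = 1 := by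
  ext p q
  have h1 : ((Matrix.of (fun p j : m × n => A p.1 j.1 * B p.2 j.2)) *
      (Matrix.of (fun p j : m × n => A p.1 j.1 * B p.2 j.2))ᴴ) p q
      = (A * Aᴴ) p.1 q.1 * (B * Bᴴ) p.2 q.2 := by
    simp only [Matrix.mul_apply, conjTranspose_apply, of_apply, Fintype.sum_prod_type,
      star_mul']
    rw [Finset.sum_mul_sum]
    exact Finset.sum_congr rfl fun a _ => Finset.sum_congr rfl fun b _ => by ring
  rw [h1, hA, hB]
  by_cases h : p = q
  · simp [h, Matrix.one_apply]
  · have h1 : p.1 ≠ q.1 ∨ p.2 ≠ q.2 := by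
      by_contra hc
      push_neg at hc
      exact h (Prod.ext hc.1 hc.2)
    rcases h1 with h1 | h1
    · simp [Matrix.one_apply, h, h1]
    · simp [Matrix.one_apply, h, h1]

/-- Partial diagonal sum of conjugated matrix equals conjugated marginal. -/
lemma marg_diag {m n : Type*} [Fintype m] [Fintype n] [DecidableEq m] [DecidableEq n]
    (ρ : Matrix (m × n) (m × n) ℂ)
    (ρA : Matrix m m ℂ) (hρA : ∀ a a', ρA a a' = ∑ b, ρ (a, b) (a', b))
    (A : Matrix m m ℂ) (B : Matrix n n ℂ) (hB : B * Bᴴ = 1) (a : m) :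
    ∑ b, ((Matrix.of (fun p j : m × n => A p.1 j.1 * B p.2 j.2))ᴴ * ρ *
        (Matrix.of (fun p j : m × n => A p.1 j.1 * B p.2 j.2))) (a, b) (a, b)
      = (Aᴴ * ρA * A) a a := by
  set W : Matrix (m × n) (m × n) ℂ :=
    Matrix.of (fun p j : m × n => A p.1 j.1 * B p.2 j.2) with hW
  have e1 : ∀ b, (Wᴴ * ρ * W) (a, b) (a, b)
      = ∑ p, ∑ q, star (A p.1 a) * star (B p.2 b) * ρ p q * (A q.1 a * B q.2 b) := by
    intro b
    simp only [Matrix.mul_apply, conjTranspose_apply, of_apply, star_mul',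
      Finset.sum_mul, hW]
    rw [Finset.sum_comm]
  have e2 : ∑ b, (Wᴴ * ρ * W) (a, b) (a, b)
      = ∑ p : m × n, ∑ q : m × n,
          (star (A p.1 a) * ρ p q * A q.1 a) * ∑ b, B q.2 b * star (B p.2 b) := by
    rw [Finset.sum_congr rfl fun b _ => e1 b, Finset.sum_comm]
    refine Finset.sum_congr rfl fun p _ => ?_
    rw [Finset.sum_comm]
    refine Finset.sum_congr rfl fun q _ => ?_
    rw [Finset.mul_sum]
    exact Finset.sum_congr rfl fun b _ => by ring
  have e3 : ∀ p q : m × n, (∑ b, B q.2 b * star (B p.2 b)) = (1 : Matrix n n ℂ) q.2 p.2 := by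
    intro p q
    rw [← hB]
    simp [Matrix.mul_apply, conjTranspose_apply]
  have e4 : ∑ b, (Wᴴ * ρ * W) (a, b) (a, b)
      = ∑ x' : m, ∑ x : m, ∑ y : n, star (A x' a) * ρ (x', y) (x, y) * A x a := by
    rw [e2]
    simp only [Finset.sum_congr rfl fun p _ => Finset.sum_congr rfl fun q _ =>
      congrArg _ (e3 p q)]
    simp only [Matrix.one_apply, Fintype.sum_prod_type, mul_ite, mul_one, mul_zero]
    refine Finset.sum_congr rfl fun x' _ => ?_
    rw [Finset.sum_comm]
    refine Finset.sum_congr rfl fun y _ => ?_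
    refine Finset.sum_congr rfl fun x _ => ?_
    rw [Finset.sum_ite_eq' Finset.univ x (fun y' => star (A x' a) * ρ (x', x) (y, y') * A y a)]
    simp
  rw [e4]
  simp only [Matrix.mul_apply, conjTranspose_apply, Finset.sum_mul]
  rw [Finset.sum_comm]
  refine Finset.sum_congr rfl fun x' _ => ?_
  refine Finset.sum_congr rfl fun x _ => ?_
  rw [hρA, Finset.mul_sum, Finset.sum_mul]

lemma rowsq {d : Type*} [Fintype d] [DecidableEq d] (V : Matrix d d ℂ)
    (h : V * Vᴴ = 1) (k : d) : ∑ j, Complex.normSq (V k j) = 1 := by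
  have h2 := congrFun (congrFun h k) k
  simp only [Matrix.mul_apply, conjTranspose_apply, Matrix.one_apply_eq,
    Complex.star_def, Complex.mul_conj] at h2
  exact_mod_cast h2

lemma colsq {d : Type*} [Fintype d] [DecidableEq d] (V : Matrix d d ℂ)
    (h : Vᴴ * V = 1) (j : d) : ∑ k, Complex.normSq (V k j) = 1 := by
  have h2 := congrFun (congrFun h j) j
  simp only [Matrix.mul_apply, conjTranspose_apply, Matrix.one_apply_eq,
    Complex.star_def] at h2
  have h3 : ∀ k, (starRingEnd ℂ) (V k j) * V k j = (Complex.normSq (V k j) : ℂ) := by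
    intro k; rw [mul_comm, Complex.mul_conj]
  rw [Finset.sum_congr rfl fun k _ => h3 k] at h2
  exact_mod_cast h2

lemma diag_id {d : Type*} [Fintype d] [DecidableEq d] (D : d → ℝ) (V : Matrix d d ℂ)
    (j : d) : (Vᴴ * Matrix.diagonal (fun k => (D k : ℂ)) * V) j j
      = ((∑ k, D k * Complex.normSq (V k j) : ℝ) : ℂ) := by
  push_cast
  rw [Matrix.mul_apply]
  simp only [Matrix.mul_diagonal, conjTranspose_apply, Complex.star_def]
  refine Finset.sum_congr rfl fun k _ => ?_
  rw [← Complex.mul_conj]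
  ring

lemma trace_eig {d : Type*} [Fintype d] [DecidableEq d] {M : Matrix d d ℂ}
    (hM : M.IsHermitian) : M.trace = ∑ i, (hM.eigenvalues i : ℂ) := by
  conv_lhs => rw [hM.spectral_theorem, Unitary.conjStarAlgAut_apply]
  rw [Matrix.trace_mul_cycle]
  rw [show (star (hM.eigenvectorUnitary : Matrix d d ℂ)) *
    (hM.eigenvectorUnitary : Matrix d d ℂ) = 1 from Matrix.mem_unitaryGroup_iff'.mp
      (hM.eigenvectorUnitary).2, one_mul, Matrix.trace_diagonal]
  rfl

/-- Subadditivity of the von Neumann entropy: for any density operator `ρ^{AB}` on a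
(finite-dimensional) bipartite system with marginals `ρ^A` and `ρ^B`,
`S(ρ^{AB}) ≤ S(ρ^A) + S(ρ^B)`. -/
theorem stmt_15 {m n : ℕ}
    (ρ : Matrix (Fin m × Fin n) (Fin m × Fin n) ℂ)
    (hρ : ρ.PosSemidef) (hρtr : ρ.trace = 1)
    (ρA : Matrix (Fin m) (Fin m) ℂ)
    (hρA : ∀ a a', ρA a a' = ∑ b, ρ (a, b) (a', b)) (hρAh : ρA.IsHermitian)
    (ρB : Matrix (Fin n) (Fin n) ℂ)
    (hρB : ∀ b b', ρB b b' = ∑ a, ρ (a, b) (a, b')) (hρBh : ρB.IsHermitian) :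
    vonNeumannEntropy hρ.1 ≤ vonNeumannEntropy hρAh + vonNeumannEntropy hρBh := by
  classical
  set lam : Fin m × Fin n → ℝ := hρ.1.eigenvalues with hlamdef
  set mu : Fin m → ℝ := hρAh.eigenvalues with hmudef
  set nu : Fin n → ℝ := hρBh.eigenvalues with hnudef
  set U : Matrix (Fin m × Fin n) (Fin m × Fin n) ℂ :=
    (hρ.1.eigenvectorUnitary : Matrix (Fin m × Fin n) (Fin m × Fin n) ℂ) with hUdef
  set A : Matrix (Fin m) (Fin m) ℂ :=
    (hρAh.eigenvectorUnitary : Matrix (Fin m) (Fin m) ℂ) with hAdef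
  set B : Matrix (Fin n) (Fin n) ℂ :=
    (hρBh.eigenvectorUnitary : Matrix (Fin n) (Fin n) ℂ) with hBdef
  set W : Matrix (Fin m × Fin n) (Fin m × Fin n) ℂ :=
    Matrix.of (fun p j => A p.1 j.1 * B p.2 j.2) with hWdef
  set V : Matrix (Fin m × Fin n) (Fin m × Fin n) ℂ := Uᴴ * W with hVdef
  set p : (Fin m × Fin n) → (Fin m × Fin n) → ℝ :=
    fun k j => Complex.normSq (V k j) with hpdef
  set c : (Fin m × Fin n) → ℝ := fun j => ∑ k, lam k * p k j with hcdef
  set t : (Fin m × Fin n) → ℝ := fun j => mu j.1 * nu j.2 with htdef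
  -- unitarity facts
  have hU1 : U * Uᴴ = 1 := by
    rw [hUdef, ← Matrix.star_eq_conjTranspose]
    exact Matrix.mem_unitaryGroup_iff.mp (hρ.1.eigenvectorUnitary).2
  have hU2 : Uᴴ * U = 1 := by
    rw [hUdef, ← Matrix.star_eq_conjTranspose]
    exact Matrix.mem_unitaryGroup_iff'.mp (hρ.1.eigenvectorUnitary).2
  have hA1 : A * Aᴴ = 1 := by
    rw [hAdef, ← Matrix.star_eq_conjTranspose]
    exact Matrix.mem_unitaryGroup_iff.mp (hρAh.eigenvectorUnitary).2
  have hA2 : Aᴴ * A = 1 := by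
    rw [hAdef, ← Matrix.star_eq_conjTranspose]
    exact Matrix.mem_unitaryGroup_iff'.mp (hρAh.eigenvectorUnitary).2
  have hB1 : B * Bᴴ = 1 := by
    rw [hBdef, ← Matrix.star_eq_conjTranspose]
    exact Matrix.mem_unitaryGroup_iff.mp (hρBh.eigenvectorUnitary).2
  have hB2 : Bᴴ * B = 1 := by
    rw [hBdef, ← Matrix.star_eq_conjTranspose]
    exact Matrix.mem_unitaryGroup_iff'.mp (hρBh.eigenvectorUnitary).2
  have hW1 : W * Wᴴ = 1 := kron_unitary A B hA1 hB1
  have hWH : Wᴴ = Matrix.of (fun p j : Fin m × Fin n => Aᴴ p.1 j.1 * Bᴴ p.2 j.2) := by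
    ext p j
    simp only [conjTranspose_apply, of_apply, hWdef, star_mul']
    try exact mul_comm _ _
  have hW2 : Wᴴ * W = 1 := by
    have h := kron_unitary Aᴴ Bᴴ
      (by rw [conjTranspose_conjTranspose]; exact hA2)
      (by rw [conjTranspose_conjTranspose]; exact hB2)
    rw [← hWH] at h
    rwa [conjTranspose_conjTranspose] at h
  have hV1 : V * Vᴴ = 1 := by
    rw [hVdef, conjTranspose_mul, conjTranspose_conjTranspose]
    calc Uᴴ * W * (Wᴴ * U) = Uᴴ * (W * Wᴴ) * U := by
          simp only [Matrix.mul_assoc]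
      _ = 1 := by rw [hW1, mul_one, hU2]
  have hV2 : Vᴴ * V = 1 := by
    rw [hVdef, conjTranspose_mul, conjTranspose_conjTranspose]
    calc Wᴴ * U * (Uᴴ * W) = Wᴴ * (U * Uᴴ) * W := by
          simp only [Matrix.mul_assoc]
      _ = 1 := by rw [hU1, mul_one, hW2]
  -- positivity
  have hρApsd : ρA.PosSemidef := margA_psd ρ hρ ρA hρA hρAh
  have hρBpsd : ρB.PosSemidef := by
    refine margA_psd (ρ.submatrix Prod.swap Prod.swap) (hρ.submatrix _) ρB ?_ hρBh
    intro b b'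
    simp only [Matrix.submatrix_apply, Prod.swap_prod_mk]
    exact hρB b b'
  have hlam : ∀ k, 0 ≤ lam k := hρ.eigenvalues_nonneg
  have hmu : ∀ a, 0 ≤ mu a := hρApsd.eigenvalues_nonneg
  have hnu : ∀ b, 0 ≤ nu b := hρBpsd.eigenvalues_nonneg
  have hpnn : ∀ k j, 0 ≤ p k j := fun k j => Complex.normSq_nonneg _
  -- traces
  have hlams : ∑ k, lam k = 1 := by
    have h := trace_eig hρ.1
    rw [hρtr] at h
    exact_mod_cast h.symm
  have htrA : ρA.trace = 1 := by
    rw [← hρtr]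
    simp only [Matrix.trace, Matrix.diag]
    rw [Fintype.sum_prod_type]
    exact Finset.sum_congr rfl fun a _ => hρA a a
  have htrB : ρB.trace = 1 := by
    rw [← hρtr]
    simp only [Matrix.trace, Matrix.diag]
    rw [Fintype.sum_prod_type, Finset.sum_comm]
    exact Finset.sum_congr rfl fun b _ => hρB b b
  have hmus : ∑ a, mu a = 1 := by
    have h := trace_eig hρAh
    rw [htrA] at h
    exact_mod_cast h.symm
  have hnus : ∑ b, nu b = 1 := by
    have h := trace_eig hρBh
    rw [htrB] at h
    exact_mod_cast h.symm
  -- double stochasticity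
  have hrow : ∀ k, ∑ j, p k j = 1 := fun k => rowsq V hV1 k
  have hcol : ∀ j, ∑ k, p k j = 1 := fun j => colsq V hV2 j
  -- the diagonal identity
  have hsp : Wᴴ * ρ * W = Vᴴ * Matrix.diagonal (fun k => (lam k : ℂ)) * V := by
    have hd : Matrix.diagonal ((RCLike.ofReal : ℝ → ℂ) ∘ lam)
        = Matrix.diagonal (fun k => (lam k : ℂ)) := rfl
    conv_lhs => rw [hρ.1.spectral_theorem, Unitary.conjStarAlgAut_apply]
    rw [Matrix.star_eq_conjTranspose, ← hUdef, ← hlamdef, hd, hVdef,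
      conjTranspose_mul, conjTranspose_conjTranspose]
    simp only [Matrix.mul_assoc]
  have hdiag : ∀ j, (Wᴴ * ρ * W) j j = ((c j : ℝ) : ℂ) := by
    intro j
    rw [hsp]
    exact diag_id lam V j
  -- marginal identities
  have hmarA : ∀ a, ∑ b, c (a, b) = mu a := by
    intro a
    have h1 := marg_diag ρ ρA hρA A B hB1 a
    rw [← hWdef] at h1
    have h2 : (Aᴴ * ρA * A) a a = (mu a : ℂ) := by
      have hD : star A * ρA * A = diagonal (RCLike.ofReal ∘ hρAh.eigenvalues) := by
        have := hρAh.conjStarAlgAut_star_eigenvectorUnitary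
        rw [Unitary.conjStarAlgAut_apply, Unitary.coe_star, star_star] at this
        exact this
      rw [← Matrix.star_eq_conjTranspose, hD]
      simp [hmudef]
    rw [h2, Finset.sum_congr rfl fun b _ => hdiag (a, b)] at h1
    rw [← Complex.ofReal_sum] at h1
    exact_mod_cast h1
  have hmarB : ∀ b, ∑ a, c (a, b) = nu b := by
    intro b
    set e : (Fin n × Fin m) ≃ (Fin m × Fin n) := Equiv.prodComm (Fin n) (Fin m) with hedef
    have h1 := marg_diag (ρ.submatrix e e) ρB
      (fun b b' => by
        simp only [Matrix.submatrix_apply, hedef, Equiv.prodComm_apply, Prod.swap_prod_mk]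
        exact hρB b b') B A hA1 b
    have hW' : (Matrix.of (fun p j : Fin n × Fin m => B p.1 j.1 * A p.2 j.2))
        = W.submatrix e e := by
      ext q j
      simp only [of_apply, Matrix.submatrix_apply, hWdef, hedef,
        Equiv.prodComm_apply, Prod.swap_prod_mk]
      try exact mul_comm _ _
    rw [hW'] at h1
    have h3 : (W.submatrix e e)ᴴ * ρ.submatrix e e * W.submatrix e e
        = (Wᴴ * ρ * W).submatrix e e := by
      rw [Matrix.conjTranspose_submatrix, Matrix.submatrix_mul_equiv,
        Matrix.submatrix_mul_equiv]
    rw [h3] at h1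
    have h4 : ∀ a, ((Wᴴ * ρ * W).submatrix e e) (b, a) (b, a)
        = (Wᴴ * ρ * W) (a, b) (a, b) := by
      intro a
      simp [Matrix.submatrix_apply, hedef, Equiv.prodComm_apply, Prod.swap_prod_mk]
    rw [Finset.sum_congr rfl fun a _ => (h4 a).trans (hdiag (a, b))] at h1
    have h5 : (Bᴴ * ρB * B) b b = (nu b : ℂ) := by
      have hD : star B * ρB * B = diagonal (RCLike.ofReal ∘ hρBh.eigenvalues) := by
        have := hρBh.conjStarAlgAut_star_eigenvectorUnitary
        rw [Unitary.conjStarAlgAut_apply, Unitary.coe_star, star_star] at this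
        exact this
      rw [← Matrix.star_eq_conjTranspose, hD]
      simp [hnudef]
    rw [h5, ← Complex.ofReal_sum] at h1
    exact_mod_cast h1
  -- derived facts
  have hcnn : ∀ j, 0 ≤ c j :=
    fun j => Finset.sum_nonneg fun k _ => mul_nonneg (hlam k) (hpnn k j)
  have hczero : ∀ j, t j = 0 → c j = 0 := by
    intro j hj
    rcases mul_eq_zero.mp hj with h | h
    · have hsum : ∑ b, c (j.1, b) = 0 := by rw [hmarA, h]
      have := (Finset.sum_eq_zero_iff_of_nonneg
        (fun b _ => hcnn (j.1, b))).mp hsum j.2 (Finset.mem_univ _)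
      simpa using this
    · have hsum : ∑ a, c (a, j.2) = 0 := by rw [hmarB, h]
      have := (Finset.sum_eq_zero_iff_of_nonneg
        (fun a _ => hcnn (a, j.2))).mp hsum j.1 (Finset.mem_univ _)
      simpa using this
  have hz : ∀ k j, t j = 0 → lam k * p k j = 0 := by
    intro k j hj
    have h0 := hczero j hj
    exact (Finset.sum_eq_zero_iff_of_nonneg
      (fun k _ => mul_nonneg (hlam k) (hpnn k j))).mp h0 k (Finset.mem_univ _)
  have hts : ∑ j, t j = 1 := by
    rw [Fintype.sum_prod_type]
    simp only [htdef, ← Finset.mul_sum, hnus, mul_one, hmus]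
  -- main inequality
  have hmain := klein_aux lam t p hlam
    (fun j => mul_nonneg (hmu j.1) (hnu j.2)) hpnn hlams hts hrow hcol hz
  have hrewrite : ∑ k, ∑ j, lam k * p k j * Real.log (t j)
      = ∑ a, mu a * Real.log (mu a) + ∑ b, nu b * Real.log (nu b) := by
    have h1 : ∑ k, ∑ j, lam k * p k j * Real.log (t j)
        = ∑ j, c j * Real.log (t j) := by
      rw [Finset.sum_comm]
      refine Finset.sum_congr rfl fun j _ => ?_
      rw [hcdef, Finset.sum_mul]
    have h2 : ∀ j, c j * Real.log (t j)
        = c j * Real.log (mu j.1) + c j * Real.log (nu j.2) := by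
      intro j
      rcases eq_or_ne (c j) 0 with h | h
      · simp [h]
      · have htne : t j ≠ 0 := fun h' => h (hczero j h')
        have hmune : mu j.1 ≠ 0 := fun h' => htne (by simp [htdef, h'])
        have hnune : nu j.2 ≠ 0 := fun h' => htne (by simp [htdef, h'])
        rw [htdef]
        rw [Real.log_mul hmune hnune]
        ring
    rw [h1, Finset.sum_congr rfl fun j _ => h2 j, Finset.sum_add_distrib]
    congr 1
    · rw [Fintype.sum_prod_type]
      refine Finset.sum_congr rfl fun a _ => ?_
      have : ∑ b, c (a, b) * Real.log (mu a) = (∑ b, c (a, b)) * Real.log (mu a) := by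
        rw [Finset.sum_mul]
      rw [this, hmarA]
    · rw [Fintype.sum_prod_type, Finset.sum_comm]
      refine Finset.sum_congr rfl fun b _ => ?_
      have : ∑ a, c (a, b) * Real.log (nu b) = (∑ a, c (a, b)) * Real.log (nu b) := by
        rw [Finset.sum_mul]
      rw [this, hmarB]
  rw [hrewrite] at hmain
  unfold vonNeumannEntropy
  linarith

end
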